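/- arXiv:2402.06220 — 2 statements merged into one kernel-verified Lean document; each statement's English description precedes it below -/
import Mathlib

section
/- Let F be the smallest family of subsets of {1,...,n} containing given sets S₀ = ∅, S₁, ..., Sₘ (with S₁ = {1,...,n}) and closed under set difference. If F contains all singletons, then the map i ↦ {k : i ∈ Sₖ} (sending each element to the set of indices of generating sets containing it) is injective. -/
inductive DiffClosure {α : Type*} (F0 : Set (Set α)) : Set α → Prop
  | base {S : Set α} : S ∈ F0 → DiffClosure F0 S
  | diff {A B : Set α} : DiffClosure F0 A → DiffClosure F0 B → DiffClosure F0 (A \ B)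

theorem stmt_15 (n m : ℕ) (hn : 1 ≤ n) (hm : 1 ≤ m)
    (S : Fin (m + 1) → Set (Fin n))
    (hS0 : S 0 = ∅) (hS1 : S 1 = Set.univ)
    (hsingle : ∀ x : Fin n, DiffClosure (Set.range S) {x}) :
    Function.Injective (fun i : Fin n => {k : Fin (m + 1) | i ∈ S k}) := by
  intro i j hij
  simp only [Set.ext_iff, Set.mem_setOf_eq] at hij
  have key : ∀ A : Set (Fin n), DiffClosure (Set.range S) A → (i ∈ A ↔ j ∈ A) := by
    intro A hA
    induction hA with
    | base h => obtain ⟨k, rfl⟩ := h; exact hij k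
    | diff hA hB ihA ihB => simp [Set.mem_diff, ihA, ihB]
  have := (key {i} (hsingle i)).mp rfl
  exact this.symm
end

section
/- Let F be a family of subsets of a finite set L closed under set difference and containing ∅ and L. Define an equivalence relation on L by x ~ y iff every set in F contains both or neither of x, y. Then F contains all singletons if and only if every equivalence class of ~ is a singleton. -/
/-!
Closure under differences together with `univ ∈ F` makes `F` an algebra of sets. On a finite
type, the intersection of all members of `F` containing `x` is then itself in `F`, and it is
exactly the class of `x`: a member avoiding `x` is ruled out by its complement, which contains `x`.
-/

open Set MeasureTheory

theorem isSetAlgebra_of_sdiff_mem {α : Type*} {𝒜 : Set (Set α)} (h_univ : univ ∈ 𝒜)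
    (h_sdiff : ∀ s ∈ 𝒜, ∀ t ∈ 𝒜, s \ t ∈ 𝒜) : IsSetAlgebra 𝒜 := by
  have h_compl : ∀ s ∈ 𝒜, sᶜ ∈ 𝒜 := fun s hs => compl_eq_univ_sdiff s ▸ h_sdiff _ h_univ _ hs
  refine ⟨sdiff_self ▸ h_sdiff _ h_univ _ h_univ, fun s hs => h_compl s hs,
    fun s t hs ht => ?_⟩
  have h_union : (sᶜ \ t)ᶜ = s ∪ t := by rw [sdiff_eq, compl_inter, compl_compl, compl_compl]
  exact h_union ▸ h_compl _ (h_sdiff _ (h_compl s hs) _ ht)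

theorem eq_of_forall_mem_iff_of_singleton_mem {α : Type*} {𝒜 : Set (Set α)}
    (h : ∀ x, {x} ∈ 𝒜) {x y : α} (hxy : ∀ S ∈ 𝒜, x ∈ S ↔ y ∈ S) : x = y :=
  ((hxy {x} (h x)).mp rfl).symm

namespace MeasureTheory.IsSetAlgebra

variable {α : Type*} {𝒜 : Set (Set α)}

theorem sInter_mem (h𝒜 : IsSetAlgebra 𝒜) {G : Set (Set α)} (hG : G.Finite) (hG𝒜 : G ⊆ 𝒜) :
    ⋂₀ G ∈ 𝒜 := by
  rw [sInter_eq_biInter, ← hG.coe_toFinset]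
  exact h𝒜.biInter_mem hG.toFinset fun S hS => hG𝒜 (hG.mem_toFinset.mp hS)

theorem sInter_setOf_mem_eq (h𝒜 : IsSetAlgebra 𝒜) (x : α) :
    ⋂₀ {S ∈ 𝒜 | x ∈ S} = {y | ∀ S ∈ 𝒜, x ∈ S ↔ y ∈ S} := by
  ext y
  simp only [mem_sInter, mem_ofPred_eq, and_imp]
  refine ⟨fun hy S hS => ⟨hy S hS, fun hyS => ?_⟩, fun hy S hS hxS => (hy S hS).mp hxS⟩
  by_contra hxS
  exact hy Sᶜ (h𝒜.compl_mem hS) hxS hyS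

theorem singleton_mem_of_separating [Finite α] (h𝒜 : IsSetAlgebra 𝒜)
    (hsep : ∀ x y : α, (∀ S ∈ 𝒜, x ∈ S ↔ y ∈ S) → x = y) (x : α) : {x} ∈ 𝒜 := by
  have hclass : {y | ∀ S ∈ 𝒜, x ∈ S ↔ y ∈ S} = {x} :=
    eq_singleton_iff_unique_mem.mpr ⟨fun _ _ => Iff.rfl, fun y hy => (hsep x y hy).symm⟩
  rw [← hclass, ← h𝒜.sInter_setOf_mem_eq]
  exact h𝒜.sInter_mem (toFinite _) (sep_subset _ _)

end MeasureTheory.IsSetAlgebra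

theorem stmt_19_general {L : Type*} [Finite L] (F : Set (Set L))
    (h_univ : Set.univ ∈ F)
    (h_diff : ∀ A ∈ F, ∀ B ∈ F, A \ B ∈ F) :
    (∀ x : L, {x} ∈ F) ↔
      ∀ x y : L, (∀ S ∈ F, (x ∈ S ↔ y ∈ S)) → x = y :=
  ⟨fun h _ _ => eq_of_forall_mem_iff_of_singleton_mem h,
    (isSetAlgebra_of_sdiff_mem h_univ h_diff).singleton_mem_of_separating⟩

theorem stmt_19 {L : Type*} [Finite L] (F : Set (Set L))
    (h_empty : ∅ ∈ F) (h_univ : Set.univ ∈ F)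
    (h_diff : ∀ A ∈ F, ∀ B ∈ F, A \ B ∈ F) :
    (∀ x : L, {x} ∈ F) ↔
      ∀ x y : L, (∀ S ∈ F, (x ∈ S ↔ y ∈ S)) → x = y :=
  stmt_19_general F h_univ h_diff
end
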